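/- Let A be a max-automaton with n states and k counters and let m ≥ 0. The index of ≡_m (its number of equivalence classes on Σ^*) is at most (n · (m+2)^{2(k²+k)})^n. -/

import Mathlib

/-- Counter operations over a set `C` of counters. -/
inductive CounterOp (C : Type*) where
  | inc : C → CounterOp C
  | reset : C → CounterOp C
  | max : C → C → C → CounterOp C

/-- Applying a single counter operation to a counter valuation. -/
def applyOp {C : Type*} [DecidableEq C] (ν : C → ℕ) : CounterOp C → C → ℕ
  | .inc c => Function.update ν c (ν c + 1)
  | .reset c => Function.update ν c 0
  | .max c c₀ c₁ => Function.update ν c (Nat.max (ν c₀) (ν c₁))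

/-- Applying a finite sequence of counter operations to a counter valuation. -/
def applyOps {C : Type*} [DecidableEq C] (ν : C → ℕ) : List (CounterOp C) → C → ℕ
  | [] => ν
  | op :: π => applyOps (applyOp ν op) π

/-- The transfer relation of a single counter operation. -/
def opTransfers {C : Type*} : CounterOp C → C → C → Prop
  | .inc _, c, d => c = d
  | .reset e, c, d => c = d ∧ c ≠ e
  | .max e c₀ c₁, c, d => (c = d ∧ c ≠ e) ∨ ((c = c₀ ∨ c = c₁) ∧ d = e)

/-- `Transfers π c d`: the sequence `π` of counter operations transfers counter `c`
to counter `d`. -/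
def Transfers {C : Type*} : List (CounterOp C) → C → C → Prop
  | [], c, d => c = d
  | op :: π, c, d => ∃ e, opTransfers op c e ∧ Transfers π e d

/-- `TransfersWith π c d m`: `π` transfers `c` to `d` with `m` increments, i.e. `π`
decomposes as `π₀ (inc e₁) π₁ ⋯ (inc e_m) π_m` with `π₀` transferring `c` to `e₁`,
`π_j` transferring `e_j` to `e_{j+1}`, and `π_m` transferring `e_m` to `d`. -/
inductive TransfersWith {C : Type*} : List (CounterOp C) → C → C → ℕ → Prop where
  | zero {π : List (CounterOp C)} {c d : C} :
      Transfers π c d → TransfersWith π c d 0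
  | step {π₀ π : List (CounterOp C)} {c e d : C} {m : ℕ} :
      Transfers π₀ c e → TransfersWith π e d m →
      TransfersWith (π₀ ++ CounterOp.inc e :: π) c d (m + 1)

/-- `π` is a `c`-trace of length `m`: it transfers some counter to `c` with `m` increments. -/
def IsTrace {C : Type*} (π : List (CounterOp C)) (c : C) (m : ℕ) : Prop :=
  ∃ c', TransfersWith π c' c m

/-- A (deterministic, complete) max-automaton with states `Q`, counters `C` and
input alphabet `S`: each transition is labeled by a finite sequence of counter
operations, and the acceptance condition is a boolean combination of the
per-counter conditions "`limsup ρ_c < ∞`". -/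
structure MaxAutomaton (S Q C : Type*) where
  init : Q
  step : Q → S → Q
  label : Q → S → List (CounterOp C)
  acc : (C → Prop) → Prop

namespace MaxAutomaton

variable {S Q C : Type*}

/-- The state of the (unique) run on `α` after `n` letters. -/
def stateAt (A : MaxAutomaton S Q C) (α : ℕ → S) : ℕ → Q
  | 0 => A.init
  | n + 1 => A.step (stateAt A α n) (α n)

/-- The counter valuation reached on the run on `α` after applying all operations
of the first `n` transition labels, starting from the zero valuation. -/
def valSeq [DecidableEq C] (A : MaxAutomaton S Q C) (α : ℕ → S) : ℕ → C → ℕ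
  | 0 => fun _ => 0
  | n + 1 => applyOps (valSeq A α n) (A.label (stateAt A α n) (α n))

/-- The run of `A` on `α` is accepting iff the acceptance condition is satisfied by
the assignment mapping counter `c` to true iff `limsup ρ_c < ∞`. -/
def Accepts [DecidableEq C] (A : MaxAutomaton S Q C) (α : ℕ → S) : Prop :=
  A.acc fun c => Filter.limsup (fun n => ((valSeq A α n c : ℕ) : ℕ∞)) Filter.atTop < ⊤

/-- The language of the max-automaton `A`. -/
def Lang [DecidableEq C] (A : MaxAutomaton S Q C) : Set (ℕ → S) :=
  { α | A.Accepts α }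

/-- The flattening of the labels of the first `n` transitions of the run of `A` on `α`. -/
def labelSeq (A : MaxAutomaton S Q C) (α : ℕ → S) : ℕ → List (CounterOp C)
  | 0 => []
  | n + 1 => labelSeq A α n ++ A.label (stateAt A α n) (α n)

/-- The run of `A` on `α` contains `π`: some prefix of the run ends with `π`. -/
def RunContains (A : MaxAutomaton S Q C) (α : ℕ → S) (π : List (CounterOp C)) : Prop :=
  ∃ n, π <:+ A.labelSeq α n

/-- The extended transition function `δ* : Q × Σ* → Q`. -/
def extStep (A : MaxAutomaton S Q C) : Q → List S → Q
  | q, [] => q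
  | q, a :: x => extStep A (A.step q a) x

/-- `ℓ(q, x)`: the sequence of transition labels along the run of `A` on `x` from `q`. -/
def labelsFrom (A : MaxAutomaton S Q C) : Q → List S → List (List (CounterOp C))
  | _, [] => []
  | q, a :: x => A.label q a :: labelsFrom A (A.step q a) x

end MaxAutomaton

/-- The flattening of a sequence of transition labels into a single sequence of
counter operations. -/
def flatLabels {C : Type*} (l : List (List (CounterOp C))) : List (CounterOp C) :=
  l.foldr (· ++ ·) []

/-- `l` has an infix whose flattening has a suffix that is a `c`-trace of length `m`. -/
def CondInfixTrace {C : Type*} (l : List (List (CounterOp C))) (c : C) (m : ℕ) : Prop :=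
  ∃ μ, μ <:+: l ∧ ∃ π, π <:+ flatLabels μ ∧ IsTrace π c m

/-- The flattening of `l` has a suffix that is a `c`-trace of length `m`. -/
def CondSuffixTrace {C : Type*} (l : List (List (CounterOp C))) (c : C) (m : ℕ) : Prop :=
  ∃ π, π <:+ flatLabels l ∧ IsTrace π c m

/-- The flattening of `l` transfers `c` to `d` with `m` increments. -/
def CondTransfer {C : Type*} (l : List (List (CounterOp C))) (c d : C) (m : ℕ) : Prop :=
  TransfersWith (flatLabels l) c d m

/-- `l` has a prefix whose flattening transfers `c` to `d` with `m` increments. -/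
def CondPrefixTransfer {C : Type*} (l : List (List (CounterOp C))) (c d : C) (m : ℕ) : Prop :=
  ∃ μ, μ <+: l ∧ TransfersWith (flatLabels μ) c d m

/-- The equivalence `≡_m^ops` on sequences of transition labels. -/
def EqOps {C : Type*} (m : ℕ) (l l' : List (List (CounterOp C))) : Prop :=
  ∀ (c d : C) (m' : ℕ), m' ≤ m →
    (CondInfixTrace l c m' ↔ CondInfixTrace l' c m') ∧
    (CondSuffixTrace l c m' ↔ CondSuffixTrace l' c m') ∧
    (CondTransfer l c d m' ↔ CondTransfer l' c d m') ∧
    (CondPrefixTransfer l c d m' ↔ CondPrefixTransfer l' c d m')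

/-- The equivalence `≡_m` on finite words: same transition profile and
`≡_m^ops`-equivalent label sequences from every state. -/
def EqWord {S Q C : Type*} (A : MaxAutomaton S Q C) (m : ℕ) (x x' : List S) : Prop :=
  (∀ q, A.extStep q x = A.extStep q x') ∧
  ∀ q, EqOps m (A.labelsFrom q x) (A.labelsFrom q x')


section Aux

variable {C : Type*}

lemma transfers_append {π₀ π₁ : List (CounterOp C)} {c e d : C}
    (h₀ : Transfers π₀ c e) (h₁ : Transfers π₁ e d) :
    Transfers (π₀ ++ π₁) c d := by
  induction π₀ generalizing c with
  | nil => cases h₀; simpa using h₁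
  | cons op π ih =>
    obtain ⟨e', hop, htr⟩ := h₀
    exact ⟨e', hop, ih htr⟩

lemma transfersWith_zero_iff {π : List (CounterOp C)} {c d : C} :
    TransfersWith π c d 0 ↔ Transfers π c d := by
  constructor
  · intro h; cases h; assumption
  · exact TransfersWith.zero

lemma transfersWith_mono {π : List (CounterOp C)} {c d : C} {m m' : ℕ}
    (h : TransfersWith π c d m) (hle : m' ≤ m) : TransfersWith π c d m' := by
  induction h generalizing m' with
  | zero h => interval_cases m'; exact .zero h
  | @step π₀ π c e d mm h₀ h ih =>
    cases m' with
    | zero =>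
      refine .zero (transfers_append h₀ ?_)
      exact ⟨e, rfl, transfersWith_zero_iff.mp (ih (Nat.zero_le _))⟩
    | succ j => exact .step h₀ (ih (Nat.succ_le_succ_iff.mp hle))

lemma isTrace_mono {π : List (CounterOp C)} {c : C} {m m' : ℕ}
    (h : IsTrace π c m) (hle : m' ≤ m) : IsTrace π c m' :=
  h.imp fun _ ht => transfersWith_mono ht hle

lemma condInfixTrace_mono {l : List (List (CounterOp C))} {c : C} {m m' : ℕ}
    (h : CondInfixTrace l c m) (hle : m' ≤ m) : CondInfixTrace l c m' := by
  obtain ⟨μ, hμ, π, hπ, ht⟩ := h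
  exact ⟨μ, hμ, π, hπ, isTrace_mono ht hle⟩

lemma condSuffixTrace_mono {l : List (List (CounterOp C))} {c : C} {m m' : ℕ}
    (h : CondSuffixTrace l c m) (hle : m' ≤ m) : CondSuffixTrace l c m' := by
  obtain ⟨π, hπ, ht⟩ := h
  exact ⟨π, hπ, isTrace_mono ht hle⟩

lemma condTransfer_mono {l : List (List (CounterOp C))} {c d : C} {m m' : ℕ}
    (h : CondTransfer l c d m) (hle : m' ≤ m) : CondTransfer l c d m' :=
  transfersWith_mono h hle

lemma condPrefixTransfer_mono {l : List (List (CounterOp C))} {c d : C} {m m' : ℕ}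
    (h : CondPrefixTransfer l c d m) (hle : m' ≤ m) : CondPrefixTransfer l c d m' := by
  obtain ⟨μ, hμ, ht⟩ := h
  exact ⟨μ, hμ, transfersWith_mono ht hle⟩

end Aux

open Classical in
/-- Number of `m' ≤ m` satisfying `P`. -/
noncomputable def countCond (P : ℕ → Prop) (m : ℕ) : ℕ :=
  ((Finset.range (m + 1)).filter P).card

lemma countCond_lt (P : ℕ → Prop) (m : ℕ) : countCond P m < m + 2 := by
  classical
  have : countCond P m ≤ (Finset.range (m + 1)).card := by
    unfold countCond
    convert Finset.card_filter_le _ _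
  simp only [Finset.card_range] at this; omega

lemma countCond_iff {P : ℕ → Prop} (hmono : ∀ {a b}, P a → b ≤ a → P b) {m m' : ℕ}
    (hm' : m' ≤ m) : P m' ↔ m' < countCond P m := by
  classical
  unfold countCond
  constructor
  · intro hP
    have hsub : Finset.range (m' + 1) ⊆ (Finset.range (m + 1)).filter P := by
      intro j hj
      simp only [Finset.mem_range] at hj
      simp only [Finset.mem_filter, Finset.mem_range]
      exact ⟨lt_of_lt_of_le hj (by omega), hmono hP (by omega)⟩
    have := Finset.card_le_card hsub
    simpa [Finset.card_range] using this
  · intro hlt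
    by_contra hP
    have hsub : (Finset.range (m + 1)).filter P ⊆ Finset.range m' := by
      intro j hj
      simp only [Finset.mem_filter, Finset.mem_range] at hj ⊢
      by_contra hge
      exact hP (hmono hj.2 (by omega))
    have := Finset.card_le_card hsub
    simp [Finset.card_range] at this
    omega

/-- Signature of label sequence. -/
noncomputable def opsSig {C : Type*} (m : ℕ) (l : List (List (CounterOp C))) :
    (C → Fin (m + 2)) × (C → Fin (m + 2)) × (C → C → Fin (m + 2)) × (C → C → Fin (m + 2)) :=
  (fun c => ⟨countCond (CondInfixTrace l c) m, countCond_lt _ _⟩,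
   fun c => ⟨countCond (CondSuffixTrace l c) m, countCond_lt _ _⟩,
   fun c d => ⟨countCond (CondTransfer l c d) m, countCond_lt _ _⟩,
   fun c d => ⟨countCond (CondPrefixTransfer l c d) m, countCond_lt _ _⟩)

lemma countCond_congr {P P' : ℕ → Prop} {m : ℕ} (h : ∀ m' ≤ m, (P m' ↔ P' m')) :
    countCond P m = countCond P' m := by
  classical
  unfold countCond
  congr 1
  apply Finset.filter_congr
  intro j hj
  simp only [Finset.mem_range] at hj
  simpa using h j (by omega)

lemma eqOps_iff_opsSig {C : Type*} {m : ℕ} {l l' : List (List (CounterOp C))} :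
    EqOps m l l' ↔ opsSig m l = opsSig m l' := by
  constructor
  · intro h
    unfold opsSig
    refine Prod.ext ?_ (Prod.ext ?_ (Prod.ext ?_ ?_)) <;>
      funext c <;> try funext d
    all_goals
      simp only
    · exact Fin.ext (countCond_congr fun m' hm' => (h c c m' hm').1)
    · exact Fin.ext (countCond_congr fun m' hm' => (h c c m' hm').2.1)
    · exact Fin.ext (countCond_congr fun m' hm' => (h c d m' hm').2.2.1)
    · exact Fin.ext (countCond_congr fun m' hm' => (h c d m' hm').2.2.2)
  · intro h c d m' hm'
    have h1 := congrArg Prod.fst h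
    have h2 := congrArg (fun p => p.2.1) h
    have h3 := congrArg (fun p => p.2.2.1) h
    have h4 := congrArg (fun p => p.2.2.2) h
    simp only [opsSig] at h1 h2 h3 h4
    have e1 : countCond (CondInfixTrace l c) m = countCond (CondInfixTrace l' c) m := by
      have := congrFun h1 c; exact Fin.mk.inj_iff.mp this
    have e2 : countCond (CondSuffixTrace l c) m = countCond (CondSuffixTrace l' c) m := by
      have := congrFun h2 c; exact Fin.mk.inj_iff.mp this
    have e3 : countCond (CondTransfer l c d) m = countCond (CondTransfer l' c d) m := by
      have := congrFun (congrFun h3 c) d; exact Fin.mk.inj_iff.mp this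
    have e4 : countCond (CondPrefixTransfer l c d) m
        = countCond (CondPrefixTransfer l' c d) m := by
      have := congrFun (congrFun h4 c) d; exact Fin.mk.inj_iff.mp this
    refine ⟨?_, ?_, ?_, ?_⟩
    · rw [countCond_iff (fun h hle => condInfixTrace_mono h hle) hm',
        countCond_iff (fun h hle => condInfixTrace_mono h hle) hm', e1]
    · rw [countCond_iff (fun h hle => condSuffixTrace_mono h hle) hm',
        countCond_iff (fun h hle => condSuffixTrace_mono h hle) hm', e2]
    · rw [countCond_iff (fun h hle => condTransfer_mono h hle) hm',
        countCond_iff (fun h hle => condTransfer_mono h hle) hm', e3]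
    · rw [countCond_iff (fun h hle => condPrefixTransfer_mono h hle) hm',
        countCond_iff (fun h hle => condPrefixTransfer_mono h hle) hm', e4]


universe uu in
lemma mk_le_of_inj_fin {α : Type uu} {N : ℕ} (f : α → Fin N) (hf : Function.Injective f) :
    Cardinal.mk α ≤ (N : Cardinal.{uu}) := by
  have h : Function.Injective (fun a => ULift.up.{uu} (f a)) := by
    intro a b hab
    exact hf (by simpa using congrArg ULift.down hab)
  have := Cardinal.mk_le_of_injective h
  simpa using this

/-- The index of `≡_m` is at most `(n · (m+2)^(2(k²+k)))^n` for `n` states and `k` counters. -/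
theorem eqWord_index_le
    {S Q C : Type*} [Fintype S] [Fintype Q] [Fintype C]
    (A : MaxAutomaton S Q C) (n k m : ℕ)
    (hn : Fintype.card Q = n) (hk : Fintype.card C = k) :
    Cardinal.mk (Quot (EqWord A m)) ≤
      (((n * (m + 2) ^ (2 * (k ^ 2 + k))) ^ n : ℕ) : Cardinal) := by
  classical
  have hcard : Fintype.card (Q → Q × ((C → Fin (m + 2)) × (C → Fin (m + 2)) ×
        (C → C → Fin (m + 2)) × (C → C → Fin (m + 2)))) =
      (n * (m + 2) ^ (2 * (k ^ 2 + k))) ^ n := by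
    simp only [Fintype.card_fun, Fintype.card_prod, Fintype.card_fin, hn, hk]
    ring
  set T := Q → Q × ((C → Fin (m + 2)) × (C → Fin (m + 2)) × (C → C → Fin (m + 2)) ×
      (C → C → Fin (m + 2))) with hT
  let sig : List S → T := fun x q => (A.extStep q x, opsSig m (A.labelsFrom q x))
  have hresp : ∀ x x', EqWord A m x x' → sig x = sig x' := by
    intro x x' ⟨h1, h2⟩
    funext q
    exact Prod.ext (h1 q) (eqOps_iff_opsSig.mp (h2 q))
  let F : Quot (EqWord A m) → T := Quot.lift sig hresp
  let e : T ≃ Fin (Fintype.card T) := Fintype.equivFin T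
  have hinj : Function.Injective (fun a => e (F a)) := by
    intro a b hab
    have h : F a = F b := e.injective hab
    obtain ⟨x, rfl⟩ := Quot.exists_rep a
    obtain ⟨x', rfl⟩ := Quot.exists_rep b
    have h' : sig x = sig x' := h
    apply Quot.sound
    refine ⟨fun q => ?_, fun q => ?_⟩
    · exact congrArg Prod.fst (congrFun h' q)
    · exact eqOps_iff_opsSig.mpr (congrArg Prod.snd (congrFun h' q))
  have hle := mk_le_of_inj_fin _ hinj
  rw [show Fintype.card T = (n * (m + 2) ^ (2 * (k ^ 2 + k))) ^ n from hcard] at hle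
  exact hle
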